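/- The restriction of the quotient homomorphism q: B_n^+ → Σ_n (sending σ_i to the transposition (i, i+1)) to the set S_n = {x ∈ B_n^+ : x is a left divisor of Δ} of permutation braids is a bijection onto the symmetric group Σ_n. -/

import Mathlib

/-! Basic definitions for the braid group `B_n`, its Garside structure,
and related notions, following Garside/El-Rifai–Morton.
Generators are indexed by `i : Fin (n-1)`, with `σ i` corresponding to the
Artin generator `σ_{i+1}` (1-based) of the paper. -/

/-- The braid relations, as a set of elements of the free group. -/
def braidRels (n : ℕ) : Set (FreeGroup (Fin (n - 1))) :=
  { r | (∃ i j : Fin (n - 1), (i : ℕ) + 1 < (j : ℕ) ∧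
          r = .of i * .of j * (.of i)⁻¹ * (.of j)⁻¹) ∨
        (∃ i j : Fin (n - 1), (i : ℕ) + 1 = (j : ℕ) ∧
          r = (.of i * .of j * .of i) * (.of j * .of i * .of j)⁻¹) }

/-- The braid group on `n` strands. -/
abbrev BraidGroup (n : ℕ) := PresentedGroup (braidRels n)

namespace BraidGroup

variable {n : ℕ}

/-- The Artin generator `σ_{i+1}` (`i` is a 0-based index). -/
def σ (i : Fin (n - 1)) : BraidGroup n := PresentedGroup.of i

/-- `σ'` with a natural-number 0-based index (junk value `1` out of range). -/
def σ' (n : ℕ) (i : ℕ) : BraidGroup n := if h : i < n - 1 then σ ⟨i, h⟩ else 1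

/-- The fundamental braid `Δ = (σ_1⋯σ_{n-1})(σ_1⋯σ_{n-2})⋯(σ_1σ_2)σ_1`. -/
def Δ (n : ℕ) : BraidGroup n :=
  (((List.range (n - 1)).reverse).map
    (fun j => ((List.range (j + 1)).map (σ' n)).prod)).prod

/-- The monoid of positive braids inside `B_n` (the image of `B_n^+`). -/
def positives (n : ℕ) : Submonoid (BraidGroup n) :=
  Submonoid.closure (Set.range (σ (n := n)))

/-- `x` is a positive braid. -/
def IsPositive (x : BraidGroup n) : Prop := x ∈ positives n

/-- The prefix (left-divisibility) order: `x ≼ y` iff `x⁻¹y` is positive. -/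
def LeftDvd (x y : BraidGroup n) : Prop := ∃ p, IsPositive p ∧ x * p = y

/-- The right-divisibility order: `x ≼_R y` iff `y x⁻¹` is positive. -/
def RightDvd (x y : BraidGroup n) : Prop := ∃ p, IsPositive p ∧ p * x = y

/-- Permutation braids: positive left divisors of `Δ`. -/
def IsPermBraid (x : BraidGroup n) : Prop := IsPositive x ∧ LeftDvd x (Δ n)

/-- The involution `τ` of `B_n`, determined by `τ(σ_i) = σ_{n-i}`
(on 0-based indices: `i ↦ (n-2) - i`, i.e. `Fin.rev`). -/
noncomputable def τ (n : ℕ) : BraidGroup n →* BraidGroup n :=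
  Classical.epsilon (fun f => ∀ i : Fin (n - 1), f (σ i) = σ i.rev)

/-- `τ^u` for an integer `u`: equals `τ` for odd `u` and the identity for even `u`
(`τ` is an involution). -/
noncomputable def τpow (u : ℤ) (x : BraidGroup n) : BraidGroup n :=
  if Even u then x else τ n x

/-- The product `a⬝b` of a permutation braid `a` and a positive braid `b` is left
weighted iff `a* ∧ b = e`, i.e. no generator left-divides both `a* = a⁻¹Δ` and `b`. -/
def IsLeftWeighted (a b : BraidGroup n) : Prop :=
  ∀ i : Fin (n - 1), ¬ (LeftDvd (σ i) (a⁻¹ * Δ n) ∧ LeftDvd (σ i) b)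

/-- `Δ^u x_1 ⋯ x_k` is the left weighted form of `x`, where `L = [x_1, …, x_k]`. -/
def IsWeightedForm (u : ℤ) (L : List (BraidGroup n)) (x : BraidGroup n) : Prop :=
  (∀ a ∈ L, IsPermBraid a ∧ a ≠ 1 ∧ a ≠ Δ n) ∧
  L.Chain' IsLeftWeighted ∧
  x = (Δ n) ^ u * L.prod

/-- The left weighted form of a braid (chosen by choice; it exists and is unique). -/
noncomputable def wf (x : BraidGroup n) : ℤ × List (BraidGroup n) :=
  Classical.epsilon (fun p => IsWeightedForm p.1 p.2 x)

/-- The infimum `inf(x)`. -/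
noncomputable def binf (x : BraidGroup n) : ℤ := (wf x).1

/-- The canonical length `ℓ(x)`. -/
noncomputable def blen (x : BraidGroup n) : ℕ := (wf x).2.length

/-- The supremum `sup(x) = inf(x) + ℓ(x)`. -/
noncomputable def bsup (x : BraidGroup n) : ℤ := binf x + blen x

/-- The head `H(x)`: the first factor of the weighted form. -/
noncomputable def bhead (x : BraidGroup n) : BraidGroup n := ((wf x).2.head?).getD 1

/-- The tail `T(x)`: the last factor of the weighted form. -/
noncomputable def btail (x : BraidGroup n) : BraidGroup n := ((wf x).2.getLast?).getD 1

/-- Cycling: `c(x) = τ^u(H(x))⁻¹ · x · τ^u(H(x))`. -/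
noncomputable def cyc (x : BraidGroup n) : BraidGroup n :=
  (τpow (binf x) (bhead x))⁻¹ * x * τpow (binf x) (bhead x)

/-- Decycling: `d(x) = T(x) · x · T(x)⁻¹`. -/
noncomputable def decyc (x : BraidGroup n) : BraidGroup n :=
  btail x * x * (btail x)⁻¹

/-- `x` is cyclically weighted: `x_k ⬝ τ^u(x_1)` is left weighted. -/
noncomputable def IsCW (x : BraidGroup n) : Prop :=
  IsLeftWeighted (btail x) (τpow (binf x) (bhead x))

/-- `x` is weakly cyclically weighted: `H(x·τ^u(H(x))) = H(x)`. -/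
noncomputable def IsWCW (x : BraidGroup n) : Prop :=
  bhead (x * τpow (binf x) (bhead x)) = bhead x

/-- The summit set of `x`: conjugates with maximal infimum. -/
def SS (x : BraidGroup n) : Set (BraidGroup n) :=
  { y | IsConj x y ∧ ∀ z, IsConj x z → binf z ≤ binf y }

/-- The super summit set of `x`: conjugates with maximal infimum and minimal supremum. -/
def SSS (x : BraidGroup n) : Set (BraidGroup n) :=
  { y | y ∈ SS x ∧ ∀ z, IsConj x z → bsup y ≤ bsup z }

/-- The ultra summit set of `x`. -/
def USS (x : BraidGroup n) : Set (BraidGroup n) :=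
  { y ∈ SSS x | ∃ M : ℕ, 0 < M ∧ cyc^[M] y = y }

/-- The reduced super summit set of `x`. -/
def RSSS (x : BraidGroup n) : Set (BraidGroup n) :=
  { y | IsConj x y ∧ (∃ M : ℕ, 0 < M ∧ cyc^[M] y = y) ∧
        (∃ N : ℕ, 0 < N ∧ decyc^[N] y = y) }

/-- The left meet (greatest common left divisor) of two braids. -/
noncomputable def leftMeet (a b : BraidGroup n) : BraidGroup n :=
  Classical.epsilon (fun m => IsPositive m ∧ LeftDvd m a ∧ LeftDvd m b ∧
    ∀ c, IsPositive c → LeftDvd c a → LeftDvd c b → LeftDvd c m)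

/-- `x` is periodic: some positive power of `x` is a power of `Δ²`. -/
def IsPeriodic (x : BraidGroup n) : Prop :=
  ∃ m : ℕ, 0 < m ∧ ∃ k : ℤ, x ^ m = (Δ n) ^ (2 * k)

/-- The free generator `x_{i+1}` of `π₁` of the `n`-punctured disk (0-based index;
junk value `1` out of range). -/
def freeGen (n : ℕ) (i : ℕ) : FreeGroup (Fin n) := if h : i < n then .of ⟨i, h⟩ else 1

/-- The Artin action of `B_n` on the free group `F_n`:
`σ_i` sends `x_i ↦ x_i x_{i+1} x_i⁻¹`, `x_{i+1} ↦ x_i`, fixing the other generators. -/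
noncomputable def artin (n : ℕ) : BraidGroup n →* Monoid.End (FreeGroup (Fin n)) :=
  Classical.epsilon (fun f => ∀ i : Fin (n - 1),
    f (σ i) = FreeGroup.lift (fun j : Fin n =>
      if (j : ℕ) = (i : ℕ) then freeGen n i * freeGen n (i + 1) * (freeGen n i)⁻¹
      else if (j : ℕ) = (i : ℕ) + 1 then freeGen n i
      else FreeGroup.of j))

/-- The element of `π₁` represented by the round curve enclosing punctures
`I.1 + 1, …, I.2` (1-based): the product `x_{I.1+1} ⋯ x_{I.2}`. -/
def curveWord (n : ℕ) (I : ℕ × ℕ) : FreeGroup (Fin n) :=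
  ((List.range (I.2 - I.1)).map (fun t => freeGen n (I.1 + t))).prod

/-- An essential round curve: it encloses at least `2` and at most `n-1` punctures. -/
def EssentialCurve (n : ℕ) (I : ℕ × ℕ) : Prop :=
  I.1 + 2 ≤ I.2 ∧ I.2 ≤ n ∧ I.2 - I.1 ≤ n - 1

/-- Two round curves are disjoint (as curves): the intervals are disjoint or nested. -/
def CurvesCompatible (I J : ℕ × ℕ) : Prop :=
  I.2 ≤ J.1 ∨ J.2 ≤ I.1 ∨ (I.1 ≤ J.1 ∧ J.2 ≤ I.2) ∨ (J.1 ≤ I.1 ∧ I.2 ≤ J.2)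

/-- `x` is reducible: some conjugate of `x` preserves, up to conjugacy in `π₁`
(i.e. up to isotopy) and orientation, a nonempty system of disjoint essential
round curves. -/
noncomputable def IsReducible (x : BraidGroup n) : Prop :=
  ∃ y, IsConj x y ∧ ∃ F : Finset (ℕ × ℕ), F.Nonempty ∧
    (∀ I ∈ F, EssentialCurve n I) ∧
    (∀ I ∈ F, ∀ J ∈ F, I ≠ J → CurvesCompatible I J) ∧
    (∀ I ∈ F, ∃ J ∈ F, ∃ g : FreeGroup (Fin n),
      artin n y (curveWord n I) = g * curveWord n J * g⁻¹ ∨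
      artin n y (curveWord n I) = g * (curveWord n J)⁻¹ * g⁻¹)

/-- `x` is pseudo-Anosov: neither periodic nor reducible (Nielsen–Thurston). -/
noncomputable def IsPseudoAnosov (x : BraidGroup n) : Prop :=
  ¬ IsPeriodic x ∧ ¬ IsReducible x

/-- `σ_i` (1-based index `i`) left-divides the positive braid `w`, i.e. `i` is
 a descent of `w`. -/
def HasDescent (n : ℕ) (i : ℕ) (w : BraidGroup n) : Prop := LeftDvd (σ' n (i - 1)) w

/-- `D(n,k,i)`: the probability that a product of `k` independent uniformly random
permutation braids begins with the descent `i` (1-based), computed by counting. -/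
noncomputable def descentProb (n k : ℕ) (i : ℕ) : ℝ :=
  ({ f : Fin k → BraidGroup n | (∀ j, IsPermBraid (f j)) ∧
      HasDescent n i (List.ofFn f).prod }.ncard : ℝ) / (n.factorial ^ k : ℝ)

/-- `D(n,k)`: the expected number of descents of a product of `k` random
permutation braids. -/
noncomputable def descentExp (n k : ℕ) : ℝ :=
  ∑ i ∈ Finset.Icc 1 (n - 1), descentProb n k i

/-- `d(n,k) = D(n,k) - D(n,k-1)`: the expected number of descents contributed by
the `k`-th factor. -/
noncomputable def descentInc (n k : ℕ) : ℝ := descentExp n k - descentExp n (k - 1)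


/-- The braid relations on the free monoid. -/
def braidRelsMon (n : ℕ) : FreeMonoid (Fin (n - 1)) → FreeMonoid (Fin (n - 1)) → Prop :=
  fun a b =>
    (∃ i j : Fin (n - 1), (i : ℕ) + 1 < (j : ℕ) ∧
      a = .of i * .of j ∧ b = .of j * .of i) ∨
    (∃ i j : Fin (n - 1), (i : ℕ) + 1 = (j : ℕ) ∧
      a = .of i * .of j * .of i ∧ b = .of j * .of i * .of j)

/-- The positive braid monoid `B_n^+`. -/
abbrev BraidMonoid (n : ℕ) := PresentedMonoid (braidRelsMon n)

/-- The generator `σ_{i+1}` of `B_n^+` (0-based `ℕ`-index, junk value `1` out of range). -/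
def σM (n : ℕ) (i : ℕ) : BraidMonoid n :=
  if h : i < n - 1 then PresentedMonoid.of (braidRelsMon n) ⟨i, h⟩ else 1

/-- The fundamental braid `Δ` in `B_n^+`. -/
def ΔM (n : ℕ) : BraidMonoid n :=
  (((List.range (n - 1)).reverse).map
    (fun j => ((List.range (j + 1)).map (σM n)).prod)).prod

/-- The quotient homomorphism `q : B_n^+ → Σ_n` sending `σ_i` to the
transposition `(i, i+1)` (obtained by adding the relations `σ_i² = 1`). -/
noncomputable def permQuot (n : ℕ) : BraidMonoid n →* Equiv.Perm (Fin n) :=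
  Classical.epsilon (fun f => ∀ i : Fin (n - 1),
    f (PresentedMonoid.of (braidRelsMon n) i) =
      Equiv.swap ⟨i, by omega⟩ ⟨i + 1, by omega⟩)

/-- The set of permutation braids: left divisors of `Δ` in `B_n^+`. -/
def permBraids (n : ℕ) : Set (BraidMonoid n) := { x | ∃ z, x * z = ΔM n }

/-!
Besides its permutation, a positive braid records how often each pair of strands crosses; both
are read off generator by generator, through a monoid homomorphism to pairs
(permutation, crossing matrix). Modulo `2` a crossing number only depends on the permutation: it
is `1` exactly for the pairs the permutation inverts.

Consider the braids in which any two strands cross at most once. If the strands at positions `i`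
and `i + 1` of such a braid cross, then `σ_i` is a left divisor (by induction on the length; the
braid relation enters because if the outer two of three strands cross, the middle one crosses one
of them). Peeling off descents, such a braid is determined by its permutation, and every
permutation has such a lift. The length of `Δ` is the number of inversions of the reversal, so `Δ`
and its left divisors are of this kind. Conversely, such a braid keeps the property when
multiplied by a generator whose two strands have not crossed yet, until its permutation is the
reversal, and then it is `Δ`.
-/

def posL (i : Fin (n - 1)) : Fin n := ⟨i, by omega⟩

def posR (i : Fin (n - 1)) : Fin n := ⟨i + 1, by omega⟩

@[simp] lemma val_posL (i : Fin (n - 1)) : (posL i : ℕ) = i := rfl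

@[simp] lemma val_posR (i : Fin (n - 1)) : (posR i : ℕ) = i + 1 := rfl

lemma posL_lt_posR (i : Fin (n - 1)) : posL i < posR i := Nat.lt_succ_self _

lemma posR_eq_posL {i j : Fin (n - 1)} (h : (i : ℕ) + 1 = j) : posR i = posL j := Fin.ext h

lemma strictMono_of_lt_posR {α : Type*} [Preorder α] {f : Fin n → α}
    (h : ∀ i, f (posL i) < f (posR i)) : StrictMono f := by
  obtain _ | m := n
  · exact fun a => a.elim0
  · exact Fin.strictMono_iff_lt_succ.2 fun i => h i

lemma exists_lt_of_not_strictAnti {α : Type*} [LinearOrder α] {f : Fin n → α}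
    (hf : Function.Injective f) (h : ¬StrictAnti f) : ∃ i, f (posL i) < f (posR i) := by
  by_contra! hle
  exact h (strictMono_of_lt_posR (α := αᵒᵈ) fun i =>
    (hle i).lt_of_ne (hf.ne (posL_lt_posR i).ne'))

lemma _root_.Equiv.Perm.eq_one_of_strictMono {α : Type*} [LinearOrder α] [WellFoundedLT α]
    {ρ : Equiv.Perm α} (h : StrictMono ρ) : ρ = 1 :=
  Equiv.ext <| congrFun <| (h.range_inj strictMono_id).1 (by simp)

lemma _root_.Equiv.Perm.eq_of_strictAnti {α : Type*} [LinearOrder α] [WellFoundedGT α]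
    {ρ ρ' : Equiv.Perm α} (h : StrictAnti ρ) (h' : StrictAnti ρ') : ρ = ρ' :=
  Equiv.ext <| congrFun <| (h.range_inj h').1 (by simp)

def swapAt (i : Fin (n - 1)) : Equiv.Perm (Fin n) := Equiv.swap (posL i) (posR i)

lemma val_swapAt (i : Fin (n - 1)) (x : Fin n) :
    (swapAt i x : ℕ) =
      if (x : ℕ) = i then (i : ℕ) + 1 else if (x : ℕ) = (i : ℕ) + 1 then (i : ℕ) else x := by
  simp only [swapAt, Equiv.swap_apply_def, Fin.ext_iff, val_posL, val_posR]
  split_ifs <;> simp_all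

@[simp] lemma swapAt_posL (i : Fin (n - 1)) : swapAt i (posL i) = posR i :=
  Equiv.swap_apply_left _ _

@[simp] lemma swapAt_posR (i : Fin (n - 1)) : swapAt i (posR i) = posL i :=
  Equiv.swap_apply_right _ _

lemma swapAt_posL_of_ne {i j : Fin (n - 1)} (h : (j : ℕ) ≠ i) (h' : (j : ℕ) ≠ (i : ℕ) + 1) :
    swapAt i (posL j) = posL j :=
  Equiv.swap_apply_of_ne_of_ne (fun e => h (congrArg (Fin.val (n := n)) e))
    fun e => h' (congrArg (Fin.val (n := n)) e)

lemma swapAt_posR_of_ne {i j : Fin (n - 1)} (h : (j : ℕ) + 1 ≠ i) (h' : (j : ℕ) ≠ i) :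
    swapAt i (posR j) = posR j :=
  Equiv.swap_apply_of_ne_of_ne (fun e => h (congrArg (Fin.val (n := n)) e))
    fun e => h' (Nat.succ_inj.1 (congrArg (Fin.val (n := n)) e))

@[simp] lemma swapAt_swapAt (i : Fin (n - 1)) (x : Fin n) : swapAt i (swapAt i x) = x :=
  Equiv.swap_apply_self _ _ _

@[simp] lemma swapAt_inv (i : Fin (n - 1)) : (swapAt i)⁻¹ = swapAt i :=
  Equiv.swap_inv _ _

@[simp] lemma swapAt_mul_self (i : Fin (n - 1)) : swapAt i * swapAt i = 1 :=
  Equiv.swap_mul_self _ _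

lemma swapAt_mul_swapAt_mul_swapAt (i j : Fin (n - 1)) :
    swapAt i * swapAt j * swapAt i = Equiv.swap (swapAt i (posL j)) (swapAt i (posR j)) := by
  rw [Equiv.swap_apply_apply, swapAt_inv]
  rfl

lemma swapAt_lt_swapAt {i : Fin (n - 1)} {s t : Fin n} (hst : s < t)
    (h : ¬(s = posL i ∧ t = posR i)) : swapAt i s < swapAt i t := by
  simp only [Fin.ext_iff, val_posL, val_posR] at h
  rw [Fin.lt_def, val_swapAt, val_swapAt]
  split_ifs <;> omega

def pairInd (a b s t : Fin n) : ℕ := if s = a ∧ t = b ∨ s = b ∧ t = a then 1 else 0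

lemma pairInd_comm (a b s t : Fin n) : pairInd a b s t = pairInd b a s t := by
  simp only [pairInd, or_comm]

lemma pairInd_swap (a b s t : Fin n) : pairInd a b s t = pairInd a b t s := by
  simp only [pairInd, and_comm, or_comm]

lemma pairInd_inv_apply (σ : Equiv.Perm (Fin n)) (a b s t : Fin n) :
    pairInd a b (σ⁻¹ s) (σ⁻¹ t) = pairInd (σ a) (σ b) s t := by
  simp only [pairInd, Equiv.Perm.inv_eq_iff_eq, eq_comm (a := s), eq_comm (a := t)]

lemma pairInd_swapAt (i : Fin (n - 1)) (s t : Fin n) :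
    pairInd (posL i) (posR i) (swapAt i s) (swapAt i t) = pairInd (posL i) (posR i) s t := by
  rw [← swapAt_inv, pairInd_inv_apply, swapAt_posL, swapAt_posR, pairInd_comm]

lemma pairInd_posL_posR_of_ne {i j : Fin (n - 1)} (h : i ≠ j) :
    pairInd (posL j) (posR j) (posL i) (posR i) = 0 := by
  rw [pairInd, if_neg]
  simp only [Fin.ext_iff, val_posL, val_posR, ne_eq] at h ⊢
  omega

lemma sum_sum_comp_perm {α M : Type*} [Fintype α] [AddCommMonoid M] (σ : Equiv.Perm α)
    (f : α → α → M) : ∑ s, ∑ t, f (σ s) (σ t) = ∑ s, ∑ t, f s t := by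
  simp_rw [Equiv.sum_comp σ (f _)]
  exact Equiv.sum_comp σ fun s => ∑ t, f s t

lemma sum_sum_pairInd {a b : Fin n} (h : a ≠ b) : ∑ s, ∑ t, pairInd a b s t = 2 := by
  have : ∀ s t, pairInd a b s t =
      (if s = a ∧ t = b then 1 else 0) + if s = b ∧ t = a then 1 else 0 := by
    intro s t
    unfold pairInd
    split_ifs <;> simp_all
  simp [this, Finset.sum_add_distrib, ite_and]

/-- `count s t` is the number of crossings between the strands starting at positions `s` and
`t`; the strand starting at position `s` ends at position `perm⁻¹ s`. -/
@[ext] structure CrossingData (n : ℕ) where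
  perm : Equiv.Perm (Fin n)
  count : Fin n → Fin n → ℕ

namespace CrossingData

instance : One (CrossingData n) := ⟨⟨1, 0⟩⟩

instance : Mul (CrossingData n) :=
  ⟨fun a b => ⟨a.perm * b.perm, fun s t => a.count s t + b.count (a.perm⁻¹ s) (a.perm⁻¹ t)⟩⟩

@[simp] lemma one_perm : (1 : CrossingData n).perm = 1 := rfl

@[simp] lemma one_count : (1 : CrossingData n).count = 0 := rfl

@[simp] lemma mul_perm (a b : CrossingData n) : (a * b).perm = a.perm * b.perm := rfl

@[simp] lemma mul_count (a b : CrossingData n) (s t : Fin n) :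
    (a * b).count s t = a.count s t + b.count (a.perm⁻¹ s) (a.perm⁻¹ t) := rfl

instance : Monoid (CrossingData n) where
  mul_assoc a b c := by
    ext : 1
    · exact mul_assoc _ _ _
    · funext s t
      simp only [mul_count, mul_perm, mul_inv_rev, Equiv.Perm.mul_apply, add_assoc]
  one_mul a := by
    ext : 1
    · exact one_mul _
    · funext s t
      simp
  mul_one a := by
    ext : 1
    · exact mul_one _
    · funext s t
      simp

def permHom : CrossingData n →* Equiv.Perm (Fin n) where
  toFun := perm
  map_one' := rfl
  map_mul' _ _ := rfl

def ofGen (i : Fin (n - 1)) : CrossingData n := ⟨swapAt i, pairInd (posL i) (posR i)⟩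

lemma ofGen_comm {i j : Fin (n - 1)} (h : (i : ℕ) + 1 < j) :
    ofGen i * ofGen j = ofGen j * ofGen i := by
  have hi : swapAt i (posL j) = posL j := swapAt_posL_of_ne (by omega) (by omega)
  have hi' : swapAt i (posR j) = posR j := swapAt_posR_of_ne (by omega) (by omega)
  have hj : swapAt j (posL i) = posL i := swapAt_posL_of_ne (by omega) (by omega)
  have hj' : swapAt j (posR i) = posR i := swapAt_posR_of_ne (by omega) (by omega)
  ext : 1
  · change swapAt i * swapAt j = swapAt j * swapAt i
    rw [← mul_left_inj (swapAt i), swapAt_mul_swapAt_mul_swapAt, hi, hi', mul_assoc,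
      swapAt_mul_self, mul_one]
    rfl
  · funext s t
    simp only [ofGen, mul_count, pairInd_inv_apply, hi, hi', hj, hj']
    ring

lemma ofGen_braid {i j : Fin (n - 1)} (h : (i : ℕ) + 1 = j) :
    ofGen i * ofGen j * ofGen i = ofGen j * ofGen i * ofGen j := by
  have hRL := posR_eq_posL h
  have hi : swapAt i (posL j) = posL i := by rw [← hRL, swapAt_posR]
  have hi' : swapAt i (posR j) = posR j := swapAt_posR_of_ne (by omega) (by omega)
  have hj : swapAt j (posL i) = posL i := swapAt_posL_of_ne (by omega) (by omega)
  have hj' : swapAt j (posR i) = posR j := by rw [hRL, swapAt_posL]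
  ext : 1
  · change swapAt i * swapAt j * swapAt i = swapAt j * swapAt i * swapAt j
    rw [swapAt_mul_swapAt_mul_swapAt, swapAt_mul_swapAt_mul_swapAt, hi, hi', hj, hj']
  · funext s t
    simp only [ofGen, mul_count, mul_perm, pairInd_inv_apply, Equiv.Perm.mul_apply, hi, hi', hj,
      swapAt_posL, swapAt_posR, hRL]
    ring

end CrossingData

abbrev gen (i : Fin (n - 1)) : BraidMonoid n := PresentedMonoid.of (braidRelsMon n) i

lemma gen_comm {i j : Fin (n - 1)} (h : (i : ℕ) + 1 < j) : gen i * gen j = gen j * gen i :=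
  PresentedMonoid.mk_eq_mk_of_rel (.inl ⟨i, j, h, rfl, rfl⟩)

lemma gen_braid {i j : Fin (n - 1)} (h : (i : ℕ) + 1 = j) :
    gen i * gen j * gen i = gen j * gen i * gen j :=
  PresentedMonoid.mk_eq_mk_of_rel (.inr ⟨i, j, h, rfl, rfl⟩)

lemma gen_comm_of_far {i j : Fin (n - 1)} (h : (i : ℕ) + 1 < j ∨ (j : ℕ) + 1 < i) :
    gen i * gen j = gen j * gen i :=
  h.elim gen_comm fun h => (gen_comm h).symm

lemma gen_braid_of_adjacent {i j : Fin (n - 1)} (h : (i : ℕ) + 1 = j ∨ (j : ℕ) + 1 = i) :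
    gen i * gen j * gen i = gen j * gen i * gen j :=
  h.elim gen_braid fun h => (gen_braid h).symm

@[elab_as_elim]
lemma BraidMonoid.induction_on {motive : BraidMonoid n → Prop} (x : BraidMonoid n)
    (one : motive 1) (gen_mul : ∀ i x, motive x → motive (gen i * x)) : motive x :=
  Submonoid.induction_of_closure_eq_top_left (PresentedMonoid.closure_range_of _) x one
    (by rintro _ ⟨i, rfl⟩ y hy; exact gen_mul i y hy)

lemma eq_one_or_exists_eq_gen_mul (x : BraidMonoid n) : x = 1 ∨ ∃ i y, x = gen i * y := by
  induction x using BraidMonoid.induction_on with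
  | one => exact .inl rfl
  | gen_mul i y _ => exact .inr ⟨i, y, rfl⟩

def crossingHom (n : ℕ) : BraidMonoid n →* CrossingData n :=
  PresentedMonoid.lift CrossingData.ofGen <| by
    rintro a b (⟨i, j, h, rfl, rfl⟩ | ⟨i, j, h, rfl, rfl⟩) <;>
      simp only [map_mul, FreeMonoid.lift_eval_of]
    exacts [CrossingData.ofGen_comm h, CrossingData.ofGen_braid h]

lemma permQuot_gen (i : Fin (n - 1)) : permQuot n (gen i) = swapAt i :=
  Classical.epsilon_spec (p := fun f : BraidMonoid n →* Equiv.Perm (Fin n) => ∀ i : Fin (n - 1),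
    f (PresentedMonoid.of (braidRelsMon n) i) = Equiv.swap ⟨i, by omega⟩ ⟨i + 1, by omega⟩)
    ⟨CrossingData.permHom.comp (crossingHom n), fun _ => rfl⟩ i

lemma crossingHom_perm (x : BraidMonoid n) : (crossingHom n x).perm = permQuot n x := by
  change CrossingData.permHom.comp (crossingHom n) x = permQuot n x
  congr 1
  exact PresentedMonoid.ext _ fun i => (permQuot_gen i).symm

def crossings (x : BraidMonoid n) : Fin n → Fin n → ℕ := (crossingHom n x).count

@[simp] lemma crossings_one : crossings (1 : BraidMonoid n) = 0 := by
  simp [crossings]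

lemma crossings_gen (i : Fin (n - 1)) : crossings (gen i) = pairInd (posL i) (posR i) := rfl

lemma crossings_mul (x y : BraidMonoid n) (s t : Fin n) :
    crossings (x * y) s t =
      crossings x s t + crossings y ((permQuot n x)⁻¹ s) ((permQuot n x)⁻¹ t) := by
  simp [crossings, crossingHom_perm]

lemma crossings_gen_mul (i : Fin (n - 1)) (x : BraidMonoid n) (s t : Fin n) :
    crossings (gen i * x) s t =
      pairInd (posL i) (posR i) s t + crossings x (swapAt i s) (swapAt i t) := by
  rw [crossings_mul, crossings_gen, permQuot_gen, swapAt_inv]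

lemma crossings_swap (x : BraidMonoid n) (s t : Fin n) : crossings x s t = crossings x t s := by
  induction x using BraidMonoid.induction_on generalizing s t with
  | one => rfl
  | gen_mul i x ih => rw [crossings_gen_mul, crossings_gen_mul, pairInd_swap, ih]

lemma one_le_crossings_gen_mul (i : Fin (n - 1)) (x : BraidMonoid n) :
    1 ≤ crossings (gen i * x) (posL i) (posR i) := by
  rw [crossings_gen_mul, pairInd, if_pos (.inl ⟨rfl, rfl⟩)]
  omega

def lenHom (n : ℕ) : BraidMonoid n →* Multiplicative ℕ :=
  PresentedMonoid.lift (fun _ => Multiplicative.ofAdd 1) <| by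
    rintro a b (⟨i, j, -, rfl, rfl⟩ | ⟨i, j, -, rfl, rfl⟩) <;>
      simp only [map_mul, FreeMonoid.lift_eval_of]

def len (x : BraidMonoid n) : ℕ := (lenHom n x).toAdd

@[simp] lemma len_one : len (1 : BraidMonoid n) = 0 := rfl

@[simp] lemma len_gen (i : Fin (n - 1)) : len (gen i) = 1 := rfl

@[simp] lemma len_mul (x y : BraidMonoid n) : len (x * y) = len x + len y := by
  simp [len]

lemma len_list_prod (l : List (BraidMonoid n)) : len l.prod = (l.map len).sum := by
  induction l with
  | nil => rfl
  | cons x l ih => simp [ih]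

lemma sum_sum_crossings (x : BraidMonoid n) : ∑ s, ∑ t, crossings x s t = 2 * len x := by
  induction x using BraidMonoid.induction_on with
  | one => simp
  | gen_mul i x ih =>
    simp only [crossings_gen_mul, Finset.sum_add_distrib, sum_sum_comp_perm (swapAt i),
      sum_sum_pairInd (posL_lt_posR i).ne, ih, len_mul, len_gen]
    ring

def inversionInd (ρ : Equiv.Perm (Fin n)) (s t : Fin n) : ℕ :=
  if s < t ∧ ρ⁻¹ t < ρ⁻¹ s ∨ t < s ∧ ρ⁻¹ s < ρ⁻¹ t then 1 else 0

def inversionCount (ρ : Equiv.Perm (Fin n)) : ℕ := ∑ s, ∑ t, inversionInd ρ s t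

@[simp] lemma inversionInd_one (s t : Fin n) : inversionInd 1 s t = 0 := by
  rw [inversionInd, if_neg (by simp only [inv_one, Equiv.Perm.one_apply]; omega)]

lemma inversionInd_le_one (ρ : Equiv.Perm (Fin n)) (s t : Fin n) : inversionInd ρ s t ≤ 1 := by
  unfold inversionInd
  split_ifs <;> omega

lemma inversionInd_swap (ρ : Equiv.Perm (Fin n)) (s t : Fin n) :
    inversionInd ρ s t = inversionInd ρ t s := by
  unfold inversionInd
  split_ifs <;> omega

lemma inversionInd_swapAt_mul (i : Fin (n - 1)) (ρ : Equiv.Perm (Fin n)) (s t : Fin n) :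
    inversionInd (swapAt i * ρ) s t =
      (pairInd (posL i) (posR i) s t + inversionInd ρ (swapAt i s) (swapAt i t)) % 2 := by
  have hinj : s = t ∨ ρ⁻¹ (swapAt i s) ≠ ρ⁻¹ (swapAt i t) := by
    by_cases h : s = t
    · exact .inl h
    · exact .inr fun e => h (by simpa using e)
  simp only [inversionInd, pairInd, mul_inv_rev, swapAt_inv, Equiv.Perm.mul_apply, Fin.lt_def,
    Fin.ext_iff, val_swapAt, val_posL, val_posR, ne_eq] at hinj ⊢
  split_ifs <;> omega

lemma exists_inversionInd_posL_posR_eq_one {ρ : Equiv.Perm (Fin n)} (h : ρ ≠ 1) :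
    ∃ i, inversionInd ρ (posL i) (posR i) = 1 := by
  by_contra! hno
  refine h (inv_eq_one.1 (Equiv.Perm.eq_one_of_strictMono (strictMono_of_lt_posR fun i => ?_)))
  have hne : ρ⁻¹ (posL i) ≠ ρ⁻¹ (posR i) := by simp [Fin.ext_iff]
  by_contra hge
  exact hno i (if_pos (.inl ⟨posL_lt_posR i, by omega⟩))

lemma inversionInd_swapAt_mul_add_pairInd {i : Fin (n - 1)} {ρ : Equiv.Perm (Fin n)}
    (hi : inversionInd ρ (posL i) (posR i) = 1) (s t : Fin n) :
    inversionInd (swapAt i * ρ) s t + pairInd (posL i) (posR i) s t =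
      inversionInd ρ (swapAt i s) (swapAt i t) := by
  have hpar := inversionInd_swapAt_mul i ρ s t
  have := inversionInd_le_one (swapAt i * ρ) s t
  have := inversionInd_le_one ρ (swapAt i s) (swapAt i t)
  by_cases hst : s = posL i ∧ t = posR i ∨ s = posR i ∧ t = posL i
  · have : inversionInd ρ (swapAt i s) (swapAt i t) = 1 := by
      rcases hst with ⟨rfl, rfl⟩ | ⟨rfl, rfl⟩ <;> simp [inversionInd_swap ρ (posR i), hi]
    rw [pairInd, if_pos hst] at hpar ⊢
    omega
  · rw [pairInd, if_neg hst] at hpar ⊢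
    omega

lemma inversionCount_swapAt_mul {i : Fin (n - 1)} {ρ : Equiv.Perm (Fin n)}
    (hi : inversionInd ρ (posL i) (posR i) = 1) :
    inversionCount (swapAt i * ρ) + 2 = inversionCount ρ := by
  rw [inversionCount, inversionCount, ← sum_sum_pairInd (posL_lt_posR i).ne,
    ← sum_sum_comp_perm (swapAt i) (inversionInd ρ)]
  simp only [← inversionInd_swapAt_mul_add_pairInd hi, Finset.sum_add_distrib]

lemma inversionCount_revPerm :
    inversionCount (Fin.revPerm : Equiv.Perm (Fin n)) = n * (n - 1) := by
  have h : ∀ s t : Fin n, inversionInd Fin.revPerm s t = if s = t then 0 else 1 := by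
    intro s t
    simp only [inversionInd, Equiv.Perm.inv_def, Fin.revPerm_symm, Fin.revPerm_apply,
      Fin.rev_lt_rev, Fin.ext_iff]
    split_ifs <;> omega
  simp [inversionCount, h, Finset.sum_ite, ← ne_eq, Finset.filter_ne]

lemma crossings_mod_two (x : BraidMonoid n) (s t : Fin n) :
    crossings x s t % 2 = inversionInd (permQuot n x) s t := by
  induction x using BraidMonoid.induction_on generalizing s t with
  | one => simp
  | gen_mul i x ih =>
    rw [crossings_gen_mul, map_mul, permQuot_gen, inversionInd_swapAt_mul, ← ih]
    omega

lemma inversionInd_le_crossings (x : BraidMonoid n) (s t : Fin n) :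
    inversionInd (permQuot n x) s t ≤ crossings x s t := by
  have := crossings_mod_two x s t
  have := inversionInd_le_one (permQuot n x) s t
  omega

lemma crossings_pos_of_lt_of_lt (x : BraidMonoid n) {s₁ s₂ s₃ : Fin n} (h₁₂ : s₁ < s₂)
    (h₂₃ : s₂ < s₃) (h : 0 < crossings x s₁ s₃) :
    0 < crossings x s₁ s₂ ∨ 0 < crossings x s₂ s₃ := by
  induction x using BraidMonoid.induction_on generalizing s₁ s₂ s₃ with
  | one => simp at h
  | gen_mul i x ih =>
    simp only [crossings_gen_mul] at h ⊢
    by_cases h₁ : s₁ = posL i ∧ s₂ = posR i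
    · exact .inl (by simp [pairInd, h₁])
    by_cases h₂ : s₂ = posL i ∧ s₃ = posR i
    · exact .inr (by simp [pairInd, h₂])
    have h₁₃ : pairInd (posL i) (posR i) s₁ s₃ = 0 := by
      simp only [pairInd, Fin.ext_iff, val_posL, val_posR] at h₁ h₂ ⊢
      split_ifs <;> omega
    rcases ih (swapAt_lt_swapAt h₁₂ h₁) (swapAt_lt_swapAt h₂₃ h₂) (by omega) with h' | h' <;>
      omega

lemma crossings_gen_mul_of_ne {i j : Fin (n - 1)} (h : i ≠ j) (x : BraidMonoid n) :
    crossings (gen j * x) (posL i) (posR i) =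
      crossings x (swapAt j (posL i)) (swapAt j (posR i)) := by
  rw [crossings_gen_mul, pairInd_posL_posR_of_ne h, zero_add]

lemma crossings_gen_mul_of_far {i j : Fin (n - 1)} (h : (i : ℕ) + 1 < j ∨ (j : ℕ) + 1 < i)
    (x : BraidMonoid n) :
    crossings (gen j * x) (posL i) (posR i) = crossings x (posL i) (posR i) := by
  rw [crossings_gen_mul_of_ne (by rintro rfl; omega), swapAt_posL_of_ne (by omega) (by omega),
    swapAt_posR_of_ne (by omega) (by omega)]

lemma crossings_gen_mul_gen_mul_of_adjacent {i j : Fin (n - 1)}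
    (h : (i : ℕ) + 1 = j ∨ (j : ℕ) + 1 = i) (x : BraidMonoid n) :
    crossings (gen j * (gen i * x)) (posL i) (posR i) = crossings x (posL j) (posR j) := by
  rw [crossings_gen_mul_of_ne (by rintro rfl; omega), crossings_gen_mul]
  rcases h with h | h
  · have hRL := posR_eq_posL h
    rw [swapAt_posL_of_ne (by omega) (by omega), hRL, swapAt_posL, ← hRL, swapAt_posL, hRL,
      swapAt_posR_of_ne (by omega) (by omega), pairInd,
      if_neg (by simp only [Fin.ext_iff, val_posL, val_posR]; omega), zero_add]
  · have hLR := (posR_eq_posL h).symm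
    rw [swapAt_posR_of_ne (by omega) (by omega), hLR, swapAt_posR, swapAt_posL_of_ne (by omega)
      (by omega), ← hLR, swapAt_posR, pairInd,
      if_neg (by simp only [Fin.ext_iff, val_posL, val_posR]; omega), zero_add, hLR,
      crossings_swap]

def CrossesAtMostOnce (x : BraidMonoid n) : Prop := ∀ s t, crossings x s t ≤ 1

namespace CrossesAtMostOnce

variable {x y : BraidMonoid n}

lemma crossings_eq (hx : CrossesAtMostOnce x) (s t : Fin n) :
    crossings x s t = inversionInd (permQuot n x) s t := by
  have := crossings_mod_two x s t
  have := hx s t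
  omega

lemma of_mul_left (h : CrossesAtMostOnce (x * y)) : CrossesAtMostOnce x :=
  fun s t => (Nat.le_add_right _ _).trans ((crossings_mul x y s t).symm.trans_le (h s t))

lemma of_mul_right (h : CrossesAtMostOnce (x * y)) : CrossesAtMostOnce y := by
  intro s t
  have := h (permQuot n x s) (permQuot n x t)
  simp only [crossings_mul, Equiv.Perm.coe_inv, Equiv.symm_apply_apply] at this
  omega

lemma eq_one (hx : CrossesAtMostOnce x) (h : permQuot n x = 1) : x = 1 := by
  rcases eq_one_or_exists_eq_gen_mul x with rfl | ⟨i, y, rfl⟩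
  · rfl
  · have := one_le_crossings_gen_mul i y
    rw [hx.crossings_eq, h, inversionInd_one] at this
    omega

lemma two_mul_len_le (hx : CrossesAtMostOnce x) : 2 * len x ≤ n * n := by
  rw [← sum_sum_crossings]
  calc ∑ s, ∑ t, crossings x s t ≤ ∑ _s : Fin n, ∑ _t : Fin n, 1 :=
        Finset.sum_le_sum fun s _ => Finset.sum_le_sum fun t _ => hx s t
    _ = n * n := by simp

lemma crossings_posL_posR_eq_zero {j : Fin (n - 1)} (hx : CrossesAtMostOnce (gen j * x)) :
    crossings x (posL j) (posR j) = 0 := by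
  have := hx (posL j) (posR j)
  rw [crossings_gen_mul, swapAt_posL, swapAt_posR, crossings_swap, pairInd,
    if_pos (.inl ⟨rfl, rfl⟩)] at this
  omega

/-- The strands at `i, i + 1` of `σ_j x` are the outer ones of three consecutive strands of `x`,
and the middle one does not cross the one that `σ_j` has already crossed it with. -/
lemma crossings_pos_of_gen_mul_of_adjacent {i j : Fin (n - 1)}
    (h : (i : ℕ) + 1 = j ∨ (j : ℕ) + 1 = i) (hx : CrossesAtMostOnce (gen j * x))
    (hc : 0 < crossings (gen j * x) (posL i) (posR i)) : 0 < crossings x (posL i) (posR i) := by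
  have hj := hx.crossings_posL_posR_eq_zero
  rw [crossings_gen_mul_of_ne (by rintro rfl; omega)] at hc
  rcases h with h | h
  · have hRL := posR_eq_posL h
    rw [swapAt_posL_of_ne (by omega) (by omega), hRL, swapAt_posL] at hc
    rcases crossings_pos_of_lt_of_lt x (hRL ▸ posL_lt_posR i) (posL_lt_posR j) hc with h' | h'
    · rwa [hRL]
    · omega
  · have hLR := (posR_eq_posL h).symm
    rw [swapAt_posR_of_ne (by omega) (by omega), hLR, swapAt_posR] at hc
    rcases crossings_pos_of_lt_of_lt x (posL_lt_posR j) (hLR ▸ posL_lt_posR i) hc with h' | h'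
    · omega
    · rwa [hLR]

lemma exists_eq_gen_mul (hx : CrossesAtMostOnce x) {i : Fin (n - 1)}
    (hc : 0 < crossings x (posL i) (posR i)) : ∃ y, x = gen i * y := by
  induction hlen : len x using Nat.strong_induction_on generalizing x i with
  | _ m ih =>
  rcases eq_one_or_exists_eq_gen_mul x with rfl | ⟨j, x₁, rfl⟩
  · simp at hc
  have ih' {k : Fin (n - 1)} {y : BraidMonoid n} (hy : CrossesAtMostOnce y)
      (hlt : len y < len (gen j * x₁)) (hc : 0 < crossings y (posL k) (posR k)) :
      ∃ z, y = gen k * z :=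
    ih _ (hlen ▸ hlt) hy hc rfl
  rcases (by omega : j = i ∨ ((i : ℕ) + 1 < j ∨ (j : ℕ) + 1 < i) ∨
      ((i : ℕ) + 1 = j ∨ (j : ℕ) + 1 = i)) with rfl | hfar | hadj
  · exact ⟨x₁, rfl⟩
  · rw [crossings_gen_mul_of_far hfar] at hc
    obtain ⟨x₂, rfl⟩ := ih' hx.of_mul_right (by simp) hc
    exact ⟨gen j * x₂, by rw [← mul_assoc, ← mul_assoc, gen_comm_of_far hfar]⟩
  · obtain ⟨x₂, rfl⟩ :=
      ih' hx.of_mul_right (by simp) (crossings_pos_of_gen_mul_of_adjacent hadj hx hc)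
    rw [crossings_gen_mul_gen_mul_of_adjacent hadj] at hc
    obtain ⟨x₃, rfl⟩ := ih' hx.of_mul_right.of_mul_right (by simp only [len_mul, len_gen]; omega) hc
    exact ⟨gen j * gen i * x₃, by simp only [← mul_assoc, gen_braid_of_adjacent hadj]⟩

lemma eq_of_permQuot_eq (hx : CrossesAtMostOnce x) (hy : CrossesAtMostOnce y)
    (h : permQuot n x = permQuot n y) : x = y := by
  induction hlen : len x using Nat.strong_induction_on generalizing x y with
  | _ m ih =>
  by_cases h1 : permQuot n x = 1
  · rw [hx.eq_one h1, hy.eq_one (h ▸ h1)]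
  obtain ⟨i, hi⟩ := exists_inversionInd_posL_posR_eq_one h1
  obtain ⟨x', rfl⟩ := hx.exists_eq_gen_mul (by rw [hx.crossings_eq, hi]; omega)
  obtain ⟨y', rfl⟩ := hy.exists_eq_gen_mul (by rw [hy.crossings_eq, ← h, hi]; omega)
  rw [ih (len x') (by simp [← hlen]) hx.of_mul_right hy.of_mul_right
    (by simpa [permQuot_gen] using h) rfl]

lemma mul_gen (hx : CrossesAtMostOnce x) {i : Fin (n - 1)}
    (hi : permQuot n x (posL i) < permQuot n x (posR i)) : CrossesAtMostOnce (x * gen i) := by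
  intro s t
  rw [crossings_mul, crossings_gen, pairInd_inv_apply, hx.crossings_eq, pairInd]
  split_ifs with hst
  · rcases hst with ⟨rfl, rfl⟩ | ⟨rfl, rfl⟩ <;>
      simp [inversionInd, hi, hi.not_gt, (posL_lt_posR i).not_gt]
  · simpa using inversionInd_le_one _ s t

end CrossesAtMostOnce

lemma exists_crossesAtMostOnce_permQuot_eq (ρ : Equiv.Perm (Fin n)) :
    ∃ x, CrossesAtMostOnce x ∧ permQuot n x = ρ := by
  induction hcount : inversionCount ρ using Nat.strong_induction_on generalizing ρ with
  | _ m ih =>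
  by_cases h1 : ρ = 1
  · exact ⟨1, fun s t => by simp, by simp [h1]⟩
  obtain ⟨i, hi⟩ := exists_inversionInd_posL_posR_eq_one h1
  obtain ⟨x, hx, hxρ⟩ :=
    ih _ (by have := inversionCount_swapAt_mul hi; omega) (swapAt i * ρ) rfl
  refine ⟨gen i * x, fun s t => ?_, by
    rw [map_mul, permQuot_gen, hxρ, ← mul_assoc, swapAt_mul_self, one_mul]⟩
  have := inversionInd_swapAt_mul_add_pairInd hi (swapAt i s) (swapAt i t)
  rw [swapAt_swapAt, swapAt_swapAt, pairInd_swapAt] at this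
  rw [crossings_gen_mul, hx.crossings_eq, hxρ]
  have := inversionInd_le_one ρ s t
  omega

def block (n j : ℕ) : BraidMonoid n := ((List.range (j + 1)).map (σM n)).prod

lemma ΔM_eq_prod_block (n : ℕ) :
    ΔM n = (((List.range (n - 1)).reverse).map (block n)).prod := rfl

lemma σM_of_lt {t : ℕ} (ht : t < n - 1) : σM n t = gen ⟨t, ht⟩ := dif_pos ht

lemma len_block {j : ℕ} (hj : j < n - 1) : len (block n j) = j + 1 := by
  have h : ∀ t ∈ List.range (j + 1), (len ∘ σM n) t = 1 := fun t ht => by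
    rw [Function.comp_apply, σM_of_lt (by have := List.mem_range.1 ht; omega), len_gen]
  rw [block, len_list_prod, List.map_map, List.map_congr_left h]
  simp

lemma two_mul_len_ΔM : 2 * len (ΔM n) = n * (n - 1) := by
  have key : ∀ m ≤ n - 1,
      2 * len (((List.range m).reverse.map (block n)).prod) = m * (m + 1) := by
    intro m hm
    induction m with
    | zero => simp
    | succ m ih =>
      rw [List.range_succ, List.reverse_append, List.map_append, List.prod_append, len_mul,
        List.reverse_singleton, List.map_singleton, List.prod_singleton, len_block (by omega),
        mul_add, ih (by omega)]
      ring
  rw [ΔM_eq_prod_block, key _ le_rfl]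
  cases n <;> simp [mul_comm]

lemma val_permQuot_block {j : ℕ} (hj : j < n - 1) (x : Fin n) :
    (permQuot n (block n j) x : ℕ) =
      if (x : ℕ) = j + 1 then 0 else if (x : ℕ) ≤ j then (x : ℕ) + 1 else (x : ℕ) := by
  induction j generalizing x with
  | zero =>
    simp only [block, zero_add, List.range_one, List.map_singleton, List.prod_singleton,
      σM_of_lt hj, permQuot_gen, val_swapAt]
    split_ifs <;> omega
  | succ j ih =>
    rw [block, List.range_succ, List.map_append, List.prod_append, map_mul, ← block,
      Equiv.Perm.mul_apply, ih (by omega), List.map_singleton, List.prod_singleton, σM_of_lt hj,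
      permQuot_gen, val_swapAt]
    dsimp only
    split_ifs <;> omega

lemma permQuot_ΔM : permQuot n (ΔM n) = Fin.revPerm := by
  have key : ∀ m ≤ n - 1, ∀ x : Fin n,
      (permQuot n (((List.range m).reverse.map (block n)).prod) x : ℕ) =
        if (x : ℕ) ≤ m then m - x else x := by
    intro m hm
    induction m with
    | zero => simp
    | succ m ih =>
      intro x
      rw [List.range_succ, List.reverse_append, List.map_append, List.prod_append,
        List.reverse_singleton, List.map_singleton, List.prod_singleton, map_mul,
        Equiv.Perm.mul_apply, val_permQuot_block (by omega), ih (by omega)]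
      split_ifs <;> omega
  ext x
  rw [ΔM_eq_prod_block, key _ le_rfl, if_pos (by omega), Fin.revPerm_apply, Fin.val_rev]
  omega

/-- Crossing numbers dominate the inversion indicator, and both sum to `n (n - 1)` for `Δ`. -/
lemma crossesAtMostOnce_ΔM : CrossesAtMostOnce (ΔM n) := by
  have hle (p : Fin n × Fin n) :
      inversionInd (permQuot n (ΔM n)) p.1 p.2 ≤ crossings (ΔM n) p.1 p.2 :=
    inversionInd_le_crossings _ _ _
  have hsum : ∑ p : Fin n × Fin n, inversionInd (permQuot n (ΔM n)) p.1 p.2 =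
      ∑ p : Fin n × Fin n, crossings (ΔM n) p.1 p.2 := by
    rw [Fintype.sum_prod_type', Fintype.sum_prod_type', sum_sum_crossings, two_mul_len_ΔM,
      permQuot_ΔM]
    exact inversionCount_revPerm
  intro s t
  rw [← (Finset.sum_eq_sum_iff_of_le fun p _ => hle p).1 hsum (s, t) (Finset.mem_univ _)]
  exact inversionInd_le_one _ _ _

lemma CrossesAtMostOnce.exists_mul_eq_ΔM {x : BraidMonoid n} (hx : CrossesAtMostOnce x) :
    ∃ z, x * z = ΔM n := by
  induction hm : n * n - len x using Nat.strong_induction_on generalizing x with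
  | _ m ih =>
  by_cases hanti : StrictAnti (permQuot n x)
  · refine ⟨1, (mul_one x).trans (hx.eq_of_permQuot_eq crossesAtMostOnce_ΔM ?_)⟩
    rw [permQuot_ΔM]
    exact Equiv.Perm.eq_of_strictAnti hanti Fin.rev_strictAnti
  obtain ⟨i, hi⟩ := exists_lt_of_not_strictAnti (permQuot n x).injective hanti
  have hxi := hx.mul_gen hi
  have := hxi.two_mul_len_le
  obtain ⟨z, hz⟩ := ih _ (by simp only [len_mul, len_gen] at this ⊢; omega) hxi rfl
  exact ⟨gen i * z, by rw [← mul_assoc, hz]⟩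

lemma mem_permBraids_iff {x : BraidMonoid n} : x ∈ permBraids n ↔ CrossesAtMostOnce x :=
  ⟨fun ⟨_, hz⟩ => (hz ▸ crossesAtMostOnce_ΔM).of_mul_left, CrossesAtMostOnce.exists_mul_eq_ΔM⟩

/-- the restriction of `q : B_n^+ → Σ_n` to the permutation braids
is a bijection onto the symmetric group `Σ_n`. -/
theorem permQuot_bijOn_permBraids (n : ℕ) :
    Set.BijOn (⇑(permQuot n)) (permBraids n) Set.univ := by
  refine ⟨Set.mapsTo_univ _ _, fun x hx y hy h => ?_, fun ρ _ => ?_⟩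
  · exact (mem_permBraids_iff.1 hx).eq_of_permQuot_eq (mem_permBraids_iff.1 hy) h
  · obtain ⟨x, hx, rfl⟩ := exists_crossesAtMostOnce_permQuot_eq ρ
    exact ⟨x, mem_permBraids_iff.2 hx, rfl⟩

end BraidGroup
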